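/- Let A ∈ M_m(ℂ) and let G be the set of all cluster points of the sequence of powers (Aⁿ)_{n∈ℕ} in M_m(ℂ). Then: (i) G is closed under matrix multiplication: S, T ∈ G implies S·T ∈ G; (ii) G is a closed subset of M_m(ℂ); (iii) G is commutative: S·T = T·S for all S, T ∈ G; (iv) if G is nonempty, there exists E ∈ G such that S·E = E·S = S for all S ∈ G, and for every S ∈ G there exists T ∈ G with S·T = E. Hence G, if nonempty, is an abelian compact group under matrix multiplication. -/

import Mathlib

/-!
Cluster points of `a ^ n` in a Hausdorff topological monoid multiply (exponents add) and commute
(they lie in the closure of the commuting set of powers). When the orbit has compact closure,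
every cluster point `T` is `S * R` for any cluster point `S` and some cluster point `R`: take
`a ^ i → S`, then `a ^ j → T` with `j` much larger than `i`, and let `R` be a limit of
`a ^ (j - i)`. Divisibility in a commutative semigroup yields an identity and inverses.

For a complex matrix, one convergent subsequence of powers already makes the whole orbit
bounded: along it every vector has a bounded orbit, which rules out eigenvalues of modulus
`> 1` and nontrivial Jordan blocks for eigenvalues of modulus `1`, while generalized
eigenvectors for eigenvalues of modulus `< 1` have bounded orbits in any case.
-/

open Filter Topology Set Matrix

instance Filter.NeBot.curry {α β : Type*} {l : Filter α} {m : Filter β} [l.NeBot]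
    [hm : m.NeBot] : (l.curry m).NeBot :=
  ⟨fun h => hm.ne <| by simpa using mem_curry_iff.1 (h ▸ mem_bot : ∅ ∈ l.curry m)⟩

theorem commute_of_mem_closure {M : Type*} [Mul M] [TopologicalSpace M]
    [SeparatelyContinuousMul M] [T2Space M] {s : Set M} (hs : ∀ x ∈ s, ∀ y ∈ s, Commute x y)
    {x y : M} (hx : x ∈ closure s) (hy : y ∈ closure s) : Commute x y := by
  have hs' : closure s ⊆ centralizer s :=
    closure_minimal (fun c hc b hb => (hs b hb c hc).eq) (isClosed_centralizer s)
  have hcl : closure s ⊆ centralizer (closure s) :=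
    closure_minimal (fun c hc b hb => (hs' hb c hc).symm) (isClosed_centralizer _)
  exact hcl hy x hx

theorem Set.exists_identity_of_exists_mul_eq {M : Type*} [Semigroup M] {G : Set M}
    (hne : G.Nonempty) (hcomm : ∀ S ∈ G, ∀ T ∈ G, S * T = T * S)
    (hdiv : ∀ S ∈ G, ∀ T ∈ G, ∃ R ∈ G, S * R = T) :
    ∃ E ∈ G, (∀ S ∈ G, S * E = S ∧ E * S = S) ∧ ∀ S ∈ G, ∃ T ∈ G, S * T = E := by
  obtain ⟨S₀, hS₀⟩ := hne
  obtain ⟨E, hE, hS₀E⟩ := hdiv S₀ hS₀ S₀ hS₀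
  have hright : ∀ S ∈ G, S * E = S := fun S hS => by
    obtain ⟨R, hR, rfl⟩ := hdiv S₀ hS₀ S hS
    rw [hcomm S₀ hS₀ R hR, mul_assoc, hS₀E]
  exact ⟨E, hE, fun S hS => ⟨hright S hS, hcomm E hE S hS ▸ hright S hS⟩,
    fun S hS => hdiv S hS E hE⟩

section PowClusterPts

variable {M : Type*} [Monoid M] [TopologicalSpace M]

def powClusterPts (a : M) : Set M := {S | MapClusterPt S atTop fun n : ℕ => a ^ n}

variable {a : M}

theorem powClusterPts_subset_closure_range :
    powClusterPts a ⊆ closure (range fun n : ℕ => a ^ n) := fun _ hS =>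
  closure_mono (image_subset_range _ _) (mapClusterPt_atTop_iff_forall_mem_closure.1 hS 0)

theorem isClosed_powClusterPts : IsClosed (powClusterPts a) :=
  isClosed_setOfPred_clusterPt

theorem isCompact_powClusterPts (hK : IsCompact (closure (range fun n : ℕ => a ^ n))) :
    IsCompact (powClusterPts a) :=
  hK.of_isClosed_subset isClosed_powClusterPts powClusterPts_subset_closure_range

variable [ContinuousMul M]

theorem mul_mem_powClusterPts {S T : M} (hS : S ∈ powClusterPts a)
    (hT : T ∈ powClusterPts a) : S * T ∈ powClusterPts a := by
  simp only [powClusterPts, mem_ofPred_eq, mapClusterPt_iff_frequently, frequently_atTop] at *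
  intro U hU N
  obtain ⟨V, hV, W, hW, hVW⟩ := mem_nhds_prod_iff.1 (continuous_mul.tendsto (S, T) hU)
  obtain ⟨j, hj, hjW⟩ := hT W hW N
  obtain ⟨i, -, hiV⟩ := hS V hV 0
  exact ⟨i + j, le_add_left hj, pow_add a i j ▸ hVW (mk_mem_prod hiV hjW)⟩

variable [T2Space M]

theorem commute_of_mem_powClusterPts {S T : M} (hS : S ∈ powClusterPts a)
    (hT : T ∈ powClusterPts a) : S * T = T * S :=
  (commute_of_mem_closure (by rintro _ ⟨i, rfl⟩ _ ⟨j, rfl⟩; exact Commute.pow_pow_self a i j)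
    (powClusterPts_subset_closure_range hS) (powClusterPts_subset_closure_range hT)).eq

theorem exists_mul_eq_of_isCompact (hK : IsCompact (closure (range fun n : ℕ => a ^ n)))
    {S T : M} (hS : S ∈ powClusterPts a) (hT : T ∈ powClusterPts a) :
    ∃ R ∈ powClusterPts a, S * R = T := by
  obtain ⟨US, -, hUS⟩ := mapClusterPt_iff_ultrafilter.1 hS
  obtain ⟨UT, hUT, hUT'⟩ := mapClusterPt_iff_ultrafilter.1 hT
  -- Along `US.curry UT` the exponent `j` tending to `T` is chosen after `i`, so `j - i → ∞`.
  let W := Ultrafilter.of ((US : Filter ℕ).curry (UT : Filter ℕ))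
  have hW : (W : Filter (ℕ × ℕ)) ≤ (US : Filter ℕ).curry UT := Ultrafilter.of_le _
  have hgap : Tendsto (fun p : ℕ × ℕ => p.2 - p.1) W atTop := tendsto_atTop.2 fun N =>
    hW <| eventually_curry_iff.2 <| .of_forall fun i =>
      Eventually.mono (hUT (eventually_ge_atTop (i + N))) fun j hj => by omega
  have hle : ∀ᶠ p : ℕ × ℕ in W, p.1 ≤ p.2 :=
    hW <| eventually_curry_iff.2 <| .of_forall fun i => hUT (eventually_ge_atTop i)
  obtain ⟨R, -, hR⟩ := hK.ultrafilter_le_nhds' (W.map fun p => a ^ (p.2 - p.1))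
    (Ultrafilter.mem_map.2 <| univ_mem' fun p : ℕ × ℕ => subset_closure (mem_range_self _))
  change Tendsto _ (W : Filter (ℕ × ℕ)) (𝓝 R) at hR
  have hSR : Tendsto (fun p : ℕ × ℕ => a ^ p.2) W (𝓝 (S * R)) :=
    (((hUS.comp tendsto_fst).mono_left (hW.trans curry_le_prod)).mul hR).congr' <|
      hle.mono fun p hp => by simp [← pow_add, Nat.add_sub_cancel' hp]
  exact ⟨R, MapClusterPt.of_comp hgap hR.mapClusterPt,
    tendsto_nhds_unique hSR ((hUT'.comp tendsto_snd).mono_left (hW.trans curry_le_prod))⟩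

end PowClusterPts

theorem norm_le_max_of_eq_smul_add {𝕜 E : Type*} [NormedField 𝕜] [SeminormedAddCommGroup E]
    [NormedSpace 𝕜 E] {x y : ℕ → E} {μ : 𝕜} {D : ℝ} (hμ : ‖μ‖ < 1) (hy : ∀ n, ‖y n‖ ≤ D)
    (hx : ∀ n, x (n + 1) = μ • x n + y n) (n : ℕ) : ‖x n‖ ≤ max ‖x 0‖ (D / (1 - ‖μ‖)) := by
  set C := max ‖x 0‖ (D / (1 - ‖μ‖))
  have hD : D ≤ (1 - ‖μ‖) * C := by
    rw [← div_le_iff₀' (by linarith)]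
    exact le_max_right _ _
  induction n with
  | zero => exact le_max_left _ _
  | succ n ih =>
    calc ‖x (n + 1)‖ ≤ ‖μ‖ * ‖x n‖ + ‖y n‖ := by
          rw [hx, ← norm_smul]; exact norm_add_le _ _
      _ ≤ ‖μ‖ * C + D := by gcongr; exact hy n
      _ ≤ C := by linarith

namespace Module.End

variable {𝕜 V : Type*} [RCLike 𝕜] [NormedAddCommGroup V] [NormedSpace 𝕜 V]

def boundedOrbits (f : End 𝕜 V) : Submodule 𝕜 V where
  carrier := {v | ∃ C, ∀ n, ‖(f ^ n) v‖ ≤ C}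
  zero_mem' := ⟨0, by simp⟩
  add_mem' := by
    rintro v w ⟨C, hC⟩ ⟨D, hD⟩
    exact ⟨C + D, fun n => by simpa using (norm_add_le _ _).trans (add_le_add (hC n) (hD n))⟩
  smul_mem' := by
    rintro c v ⟨C, hC⟩
    exact ⟨‖c‖ * C, fun n => by rw [map_smul, norm_smul]; gcongr; exact hC n⟩

variable {f : End 𝕜 V} {l : Filter ℕ} {μ : 𝕜} {v w : V}

theorem HasEigenvector.norm_le_one [l.NeBot] (hl : l ≤ atTop) (hv : f.HasEigenvector μ v)
    (hb : IsBoundedUnder (· ≤ ·) l fun n => ‖(f ^ n) v‖) : ‖μ‖ ≤ 1 := by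
  by_contra! hμ
  refine not_isBoundedUnder_of_tendsto_atTop (Tendsto.mono_left ?_ hl) hb
  simp only [hv.pow_apply, norm_smul, norm_pow]
  exact (tendsto_pow_atTop_atTop_of_one_lt hμ).atTop_mul_const (norm_pos_iff.2 hv.2)

theorem smul_pow_apply_of_apply_eq_smul_add (hv : f v = μ • v + w) (hw : f w = μ • w) (n : ℕ) :
    μ • (f ^ n) v = μ ^ n • (μ • v + (n : 𝕜) • w) := by
  induction n with
  | zero => simp
  | succ n ih =>
    rw [pow_succ', mul_apply, ← map_smul, ih, map_smul, map_add, map_smul, map_smul, hv, hw]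
    push_cast
    module

theorem eq_zero_of_apply_eq_smul_add [l.NeBot] (hl : l ≤ atTop) (hμ : ‖μ‖ = 1)
    (hv : f v = μ • v + w) (hw : f w = μ • w)
    (hb : IsBoundedUnder (· ≤ ·) l fun n => ‖(f ^ n) v‖) : w = 0 := by
  by_contra! hw0
  have hnorm : ∀ n : ℕ, n * ‖w‖ - ‖v‖ ≤ ‖(f ^ n) v‖ := fun n => by
    have := congrArg norm (smul_pow_apply_of_apply_eq_smul_add hv hw n)
    simp only [norm_smul, norm_pow, hμ, one_pow, one_mul] at this
    have hsub := norm_sub_le (μ • v + (n : 𝕜) • w) (μ • v)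
    rw [add_sub_cancel_left, norm_smul, norm_smul, hμ, one_mul, RCLike.norm_natCast] at hsub
    linarith
  refine not_isBoundedUnder_of_tendsto_atTop (Tendsto.mono_left ?_ hl) hb
  refine tendsto_atTop_mono hnorm (tendsto_atTop_add_const_right _ _ ?_)
  exact tendsto_natCast_atTop_atTop.atTop_mul_const (norm_pos_iff.2 hw0)

theorem maxGenEigenspace_le_boundedOrbits (hμ : ‖μ‖ < 1) :
    f.maxGenEigenspace μ ≤ f.boundedOrbits := by
  intro x hx
  obtain ⟨k, hk⟩ := (mem_maxGenEigenspace f μ x).1 hx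
  clear hx
  induction k generalizing x with
  | zero => simp_all
  | succ k ih =>
    obtain ⟨D, hD⟩ := ih (x := (f - μ • 1) x) (by rwa [← mul_apply, ← pow_succ])
    refine ⟨_, norm_le_max_of_eq_smul_add hμ hD fun n => ?_⟩
    rw [pow_succ, mul_apply, ← map_smul, ← map_add]
    simp

section BoundedAlong

variable [l.NeBot] (hl : l ≤ atTop) (hb : ∀ v, IsBoundedUnder (· ≤ ·) l fun n => ‖(f ^ n) v‖)
include hl hb

theorem maxGenEigenspace_le_eigenspace (hμ : 1 ≤ ‖μ‖) :
    f.maxGenEigenspace μ ≤ f.eigenspace μ := by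
  intro x hx
  obtain ⟨k, hk⟩ := (mem_maxGenEigenspace f μ x).1 hx
  clear hx
  rw [mem_eigenspace_iff]
  induction k generalizing x with
  | zero => simp_all
  | succ k ih =>
    set w := (f - μ • 1) x
    have hw : f w = μ • w := ih (by rwa [← mul_apply, ← pow_succ])
    have hx : f x = μ • x + w := by simp [w]
    suffices w = 0 by simpa [this] using hx
    by_contra hw0
    have hμ1 : ‖μ‖ = 1 :=
      le_antisymm (HasEigenvector.norm_le_one hl ⟨mem_eigenspace_iff.2 hw, hw0⟩ (hb w)) hμ
    exact hw0 (eq_zero_of_apply_eq_smul_add hl hμ1 hx hw (hb x))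

theorem eigenspace_le_boundedOrbits : f.eigenspace μ ≤ f.boundedOrbits := by
  intro x hx
  rcases eq_or_ne x 0 with rfl | hx0
  · exact zero_mem _
  have hx : f.HasEigenvector μ x := ⟨hx, hx0⟩
  refine ⟨‖x‖, fun n => ?_⟩
  rw [hx.pow_apply, norm_smul, norm_pow]
  exact mul_le_of_le_one_left (norm_nonneg x)
    (pow_le_one₀ (norm_nonneg μ) (hx.norm_le_one hl (hb x)))

theorem boundedOrbits_eq_top [IsAlgClosed 𝕜] [FiniteDimensional 𝕜 V] : f.boundedOrbits = ⊤ := by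
  rw [eq_top_iff, ← iSup_maxGenEigenspace_eq_top f]
  refine iSup_le fun μ => ?_
  rcases lt_or_ge ‖μ‖ 1 with hμ | hμ
  · exact maxGenEigenspace_le_boundedOrbits hμ
  · exact (maxGenEigenspace_le_eigenspace hl hb hμ).trans (eigenspace_le_boundedOrbits hl hb)

end BoundedAlong

end Module.End

theorem Matrix.isCompact_closure_range_pow {n : Type*} [Fintype n] [DecidableEq n]
    {A : Matrix n n ℂ} (h : (powClusterPts A).Nonempty) :
    IsCompact (closure (range fun k : ℕ => A ^ k)) := by
  obtain ⟨S, hS⟩ := h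
  obtain ⟨U, hU, hAS⟩ := mapClusterPt_iff_ultrafilter.1 hS
  have hb : ∀ v, IsBoundedUnder (· ≤ ·) U fun k => ‖(toLin' A ^ k) v‖ := fun v => by
    simp only [← toLin'_pow, toLin'_apply]
    exact (((continuous_id.matrix_mulVec continuous_const).tendsto S).comp hAS).norm
      |>.isBoundedUnder_le
  have hentry : ∀ i j, ∃ C, ∀ k : ℕ, ‖(A ^ k) i j‖ ≤ C := fun i j =>
    (Module.End.boundedOrbits_eq_top hU hb ▸ Submodule.mem_top (x := Pi.single j 1)).imp
      fun C hC k => by simpa [← toLin'_pow] using (norm_le_pi_norm _ i).trans (hC k)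
  -- `Matrix` carries no global norm; boundedness is read in the product `n → n → ℂ`.
  refine Bornology.IsBounded.isCompact_closure (α := n → n → ℂ) ?_
  refine Bornology.forall_isBounded_image_eval_iff.1 fun i =>
    Bornology.forall_isBounded_image_eval_iff.1 fun j => ?_
  obtain ⟨C, hC⟩ := hentry i j
  exact isBounded_iff_forall_norm_le.2 ⟨C, by rintro _ ⟨_, ⟨_, ⟨k, rfl⟩, rfl⟩, rfl⟩; exact hC k⟩

/-- The set of cluster points of the powers of a matrix, if nonempty, is an abelian
compact group under matrix multiplication. -/
theorem stmt_12 (m : ℕ) (A : Matrix (Fin m) (Fin m) ℂ)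
    (G : Set (Matrix (Fin m) (Fin m) ℂ))
    (hG : G = {S | MapClusterPt S Filter.atTop fun n => A ^ n}) :
    (∀ S ∈ G, ∀ T ∈ G, S * T ∈ G)
      ∧ IsClosed G
      ∧ (∀ S ∈ G, ∀ T ∈ G, S * T = T * S)
      ∧ (G.Nonempty → IsCompact G ∧
          ∃ E ∈ G, (∀ S ∈ G, S * E = S ∧ E * S = S) ∧ ∀ S ∈ G, ∃ T ∈ G, S * T = E) := by
  change G = powClusterPts A at hG
  subst hG
  have hcomm : ∀ S ∈ powClusterPts A, ∀ T ∈ powClusterPts A, S * T = T * S :=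
    fun _ hS _ hT => commute_of_mem_powClusterPts hS hT
  refine ⟨fun _ hS _ hT => mul_mem_powClusterPts hS hT, isClosed_powClusterPts, hcomm,
    fun hne => ?_⟩
  have hK := isCompact_closure_range_pow hne
  exact ⟨isCompact_powClusterPts hK, exists_identity_of_exists_mul_eq hne hcomm
    fun _ hS _ hT => exists_mul_eq_of_isCompact hK hS hT⟩
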